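/- Let G be a finite simple graph and v a vertex with exactly two nonadjacent neighbors u_1, u_2, and suppose there exist two nonadjacent vertices x, y, both distinct from v, each adjacent to both u_1 and u_2. Then γ(G) < θ(G). -/

import Mathlib

/-!
Take a minimum clique partition `P` and let `C` be its clique through `v`. Since `C` lies in the
closed neighbourhood `{v, u₁, u₂}` and `u₁ u₂` is a non-edge, `C ⊆ {v, a}` and `b ∉ C` for some
labelling `{a, b} = {u₁, u₂}`. The nonadjacent vertices `x, y` lie in different cliques, so one
of them, `z`, shares no clique with `b`. Picking `b` and `z` in their cliques and one arbitrary
vertex in every other clique except `C` gives a dominating set of at most `|P| - 1` vertices: `b` dominates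
`v`, `z` dominates `a`, and every other vertex is dominated inside its own clique.
-/

open SimpleGraph

variable {V : Type*}

/-- `D` is a dominating set of `G`: every vertex not in `D` has a neighbor in `D`. -/
def IsDomSet (G : SimpleGraph V) (D : Finset V) : Prop :=
  ∀ v : V, v ∉ D → ∃ u ∈ D, G.Adj u v

/-- The domination number `γ(G)`. -/
noncomputable def domNum [Fintype V] (G : SimpleGraph V) : ℕ :=
  sInf {n | ∃ D : Finset V, IsDomSet G D ∧ D.card = n}

/-- `P` is a partition of the vertex set of `G` into cliques. -/
def IsCliquePartition (G : SimpleGraph V) (P : Finset (Finset V)) : Prop :=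
  (∀ C ∈ P, G.IsClique (C : Set V)) ∧ ∀ v : V, ∃! C : Finset V, C ∈ P ∧ v ∈ C

/-- The clique covering number `θ(G)`. -/
noncomputable def cliqueCoverNum [Fintype V] (G : SimpleGraph V) : ℕ :=
  sInf {n | ∃ P : Finset (Finset V), IsCliquePartition G P ∧ P.card = n}

theorem domNum_le_card [Fintype V] {G : SimpleGraph V} {D : Finset V} (hD : IsDomSet G D) :
    domNum G ≤ D.card :=
  Nat.sInf_le ⟨D, hD, rfl⟩

theorem isCliquePartition_singletons [Fintype V] (G : SimpleGraph V) :
    IsCliquePartition G (Finset.univ.map ⟨singleton, Finset.singleton_injective⟩) := by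
  refine ⟨fun C hC => ?_, fun w => ⟨{w}, by simp, fun C ⟨hC, hwC⟩ => ?_⟩⟩
  · obtain ⟨a, -, rfl⟩ := Finset.mem_map.1 hC
    simp
  · obtain ⟨a, -, rfl⟩ := Finset.mem_map.1 hC
    simp_all

theorem exists_isCliquePartition_card_eq_cliqueCoverNum [Fintype V] (G : SimpleGraph V) :
    ∃ P, IsCliquePartition G P ∧ P.card = cliqueCoverNum G :=
  Nat.sInf_mem (s := {n | ∃ P, IsCliquePartition G P ∧ P.card = n})
    ⟨_, _, isCliquePartition_singletons G, rfl⟩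

theorem SimpleGraph.IsClique.eq_or_eq_of_neighborSet_eq_pair {G : SimpleGraph V} {C : Set V}
    {v u₁ u₂ : V} (hC : G.IsClique C) (hvC : v ∈ C) (hN : G.neighborSet v = {u₁, u₂})
    (hu₂ : u₂ ∉ C) : ∀ w ∈ C, w = v ∨ w = u₁ := by
  intro w hwC
  by_cases hwv : w = v
  · exact .inl hwv
  · have hw : w ∈ G.neighborSet v := hC hvC hwC (Ne.symm hwv)
    rw [hN] at hw
    rcases hw with rfl | rfl
    · exact .inr rfl
    · exact absurd hwC hu₂

namespace IsCliquePartition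

variable {G : SimpleGraph V} {P : Finset (Finset V)} {C C' : Finset V} {a b : V}

theorem adj (hP : IsCliquePartition G P) (hC : C ∈ P) (ha : a ∈ C) (hb : b ∈ C) (hab : a ≠ b) :
    G.Adj a b :=
  hP.1 C hC (Finset.mem_coe.2 ha) (Finset.mem_coe.2 hb) hab

theorem eq_of_mem (hP : IsCliquePartition G P) (hC : C ∈ P) (hC' : C' ∈ P) (ha : a ∈ C)
    (ha' : a ∈ C') : C = C' :=
  (hP.2 a).unique ⟨hC, ha⟩ ⟨hC', ha'⟩

theorem isDomSet_image_erase [DecidableEq V] (hP : IsCliquePartition G P) (r : Finset V → V)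
    (hr : ∀ C' ∈ P, C' ≠ C → C'.Nonempty → r C' ∈ C')
    (hdom : ∀ w ∈ C, ∃ C' ∈ P, C' ≠ C ∧ G.Adj (r C') w) :
    IsDomSet G ((P.erase C).image r) := by
  intro w hwD
  obtain ⟨Cw, ⟨hCwP, hwCw⟩, -⟩ := hP.2 w
  by_cases hCw : Cw = C
  · obtain ⟨C', hC'P, hC'C, hadj⟩ := hdom w (hCw ▸ hwCw)
    exact ⟨r C', Finset.mem_image_of_mem r (Finset.mem_erase.2 ⟨hC'C, hC'P⟩), hadj⟩
  · have hmem : r Cw ∈ (P.erase C).image r :=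
      Finset.mem_image_of_mem r (Finset.mem_erase.2 ⟨hCw, hCwP⟩)
    refine ⟨r Cw, hmem, hP.adj hCwP (hr Cw hCwP hCw ⟨w, hwCw⟩) hwCw ?_⟩
    rintro rfl
    exact hwD hmem

theorem domNum_lt_card [Fintype V] [DecidableEq V] (hP : IsCliquePartition G P) (hC : C ∈ P) (r : Finset V → V)
    (hr : ∀ C' ∈ P, C' ≠ C → C'.Nonempty → r C' ∈ C')
    (hdom : ∀ w ∈ C, ∃ C' ∈ P, C' ≠ C ∧ G.Adj (r C') w) :
    domNum G < P.card :=
  calc domNum G ≤ ((P.erase C).image r).card := domNum_le_card (hP.isDomSet_image_erase r hr hdom)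
    _ ≤ (P.erase C).card := Finset.card_image_le
    _ < P.card := Finset.card_erase_lt_of_mem hC

theorem domNum_lt_card_of_subset_pair [Fintype V] (hP : IsCliquePartition G P) (hC : C ∈ P)
    {v x y : V} (hvC : v ∈ C) (hCva : ∀ w ∈ C, w = v ∨ w = a) (hbC : b ∉ C) (hvb : G.Adj v b)
    (hxv : x ≠ v) (hyv : y ≠ v) (hxy : x ≠ y) (hxyadj : ¬ G.Adj x y)
    (hax : G.Adj a x) (hay : G.Adj a y) :
    domNum G < P.card := by
  classical
  have : Nonempty V := ⟨v⟩
  have not_mem_C : ∀ z, G.Adj a z → z ≠ v → z ∉ C := fun z haz hzv hzC =>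
    (hCva z hzC).elim hzv haz.ne'
  obtain ⟨Cb, ⟨hCbP, hbCb⟩, -⟩ := hP.2 b
  obtain ⟨Cx, ⟨hCxP, hxCx⟩, -⟩ := hP.2 x
  obtain ⟨Cy, ⟨hCyP, hyCy⟩, -⟩ := hP.2 y
  obtain ⟨z, Cz, hCzP, hzCz, hbCz, haz, hzC⟩ :
      ∃ z Cz, Cz ∈ P ∧ z ∈ Cz ∧ b ∉ Cz ∧ G.Adj a z ∧ z ∉ C := by
    by_cases hbCx : b ∈ Cx
    · refine ⟨y, Cy, hCyP, hyCy, fun hbCy => hxyadj ?_, hay, not_mem_C y hay hyv⟩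
      exact hP.adj hCxP hxCx (hP.eq_of_mem hCyP hCxP hbCy hbCx ▸ hyCy) hxy
    · exact ⟨x, Cx, hCxP, hxCx, hbCx, hax, not_mem_C x hax hxv⟩
  let r : Finset V → V := fun C' =>
    if b ∈ C' then b else if z ∈ C' then z else Classical.epsilon (· ∈ C')
  refine hP.domNum_lt_card hC r (fun C' _ _ hC'ne => ?_) fun w hwC => ?_
  · simp only [r]
    split_ifs with hb hz
    exacts [hb, hz, Classical.epsilon_spec hC'ne]
  · rcases hCva w hwC with rfl | rfl
    · refine ⟨Cb, hCbP, fun h => hbC (h ▸ hbCb), ?_⟩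
      simpa [r, hbCb] using hvb.symm
    · refine ⟨Cz, hCzP, fun h => hzC (h ▸ hzCz), ?_⟩
      simpa [r, hbCz, hzCz] using haz.symm

end IsCliquePartition

/-- If `v` has exactly two nonadjacent neighbors `u₁, u₂` and there exist nonadjacent
vertices `x ≠ y`, both distinct from `v` and both adjacent to `u₁` and `u₂`, then
`γ(G) < θ(G)`. -/
theorem stmt_11 [Fintype V] (G : SimpleGraph V)
    (v u₁ u₂ x y : V) (hne : u₁ ≠ u₂)
    (hN : G.neighborSet v = {u₁, u₂}) (h12 : ¬ G.Adj u₁ u₂)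
    (hxy : x ≠ y) (hxv : x ≠ v) (hyv : y ≠ v) (hxyadj : ¬ G.Adj x y)
    (hx1 : G.Adj u₁ x) (hx2 : G.Adj u₂ x) (hy1 : G.Adj u₁ y) (hy2 : G.Adj u₂ y) :
    domNum G < cliqueCoverNum G := by
  obtain ⟨P, hP, hcard⟩ := exists_isCliquePartition_card_eq_cliqueCoverNum G
  obtain ⟨C, ⟨hCP, hvC⟩, -⟩ := hP.2 v
  have hvu₁ : G.Adj v u₁ := by simp [← mem_neighborSet, hN]
  have hvu₂ : G.Adj v u₂ := by simp [← mem_neighborSet, hN]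
  rw [← hcard]
  by_cases hu₂ : u₂ ∈ C
  · have hu₁ : u₁ ∉ C := fun hu₁ => h12 (hP.adj hCP hu₁ hu₂ hne)
    have hCv : ∀ w ∈ C, w = v ∨ w = u₂ :=
      (hP.1 C hCP).eq_or_eq_of_neighborSet_eq_pair hvC (hN.trans (Set.pair_comm u₁ u₂)) hu₁
    exact hP.domNum_lt_card_of_subset_pair hCP hvC hCv hu₁ hvu₁ hxv hyv hxy hxyadj hx2 hy2
  · have hCv : ∀ w ∈ C, w = v ∨ w = u₁ :=
      (hP.1 C hCP).eq_or_eq_of_neighborSet_eq_pair hvC hN hu₂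
    exact hP.domNum_lt_card_of_subset_pair hCP hvC hCv hu₂ hvu₂ hxv hyv hxy hxyadj hx1 hy1
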